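/- N(m,n) has the Sperner property: the maximum size of an antichain in N(m,n) equals the number of elements of rank ⌊mn/2⌋, i.e. equals the central coefficient of (1 + q + ⋯ + q^n)^m. -/

import Mathlib

open Polynomial

/-- The rank of an element of `N(m,n)`: the sum of its coordinates. -/
def nRank {m n : ℕ} (c : Fin m → Fin (n + 1)) : ℕ := ∑ i, (c i : ℕ)

/-- The order on `N(m,n)`: `b < c` iff `bᵢ ≤ cᵢ` for all `i` and `Σbᵢ < Σcᵢ`. -/
def nLT {m n : ℕ} (b c : Fin m → Fin (n + 1)) : Prop :=
  (∀ i, (b i : ℕ) ≤ (c i : ℕ)) ∧ nRank b < nRank c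

/-- A symmetric chain decomposition of `N(m,n)`, packaged functionally: each
element `c` knows the bottom rank `bot c` of its chain and the element
`elt c k` of its chain at each rank `k` in `[bot c, m*n - bot c]`. -/
structure SCD (m n : ℕ) where
  bot : (Fin m → Fin (n + 1)) → ℕ
  elt : (Fin m → Fin (n + 1)) → ℕ → (Fin m → Fin (n + 1))
  two_bot_le : ∀ c, 2 * bot c ≤ m * n
  bot_le_rank : ∀ c, bot c ≤ nRank c
  rank_le : ∀ c, nRank c ≤ m * n - bot c
  rank_elt : ∀ c k, bot c ≤ k → k ≤ m * n - bot c → nRank (elt c k) = k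
  mono : ∀ c k k', bot c ≤ k → k ≤ k' → k' ≤ m * n - bot c →
    ∀ i, (elt c k i : ℕ) ≤ (elt c k' i : ℕ)
  elt_rank : ∀ c, elt c (nRank c) = c
  bot_elt : ∀ c k, bot c ≤ k → k ≤ m * n - bot c → bot (elt c k) = bot c
  elt_elt : ∀ c k k', bot c ≤ k → k ≤ m * n - bot c → bot c ≤ k' → k' ≤ m * n - bot c →
    elt (elt c k) k' = elt c k'

lemma nRank_zero {n : ℕ} (c : Fin 0 → Fin (n + 1)) : nRank c = 0 := by
  simp [nRank]

def SCD.zero (n : ℕ) : SCD 0 n where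
  bot _ := 0
  elt c _ := c
  two_bot_le c := by simp
  bot_le_rank c := by simp
  rank_le c := by simp [nRank_zero]
  rank_elt c k h1 h2 := by rw [nRank_zero]; omega
  mono c k k' _ _ _ i := i.elim0
  elt_rank c := rfl
  bot_elt c k _ _ := rfl
  elt_elt c k k' _ _ _ _ := rfl

/-- First coordinate of the hook chain element at grid rank `g`, for the hook
indexed by `t` in the grid `[0,a] × [0,n]`. -/
def hookI (n t g : ℕ) : ℕ := if g ≤ n then t else g - (n - t)

/-- Second coordinate of the hook chain element. -/
def hookJ (n t g : ℕ) : ℕ := if g ≤ n then g - t else n - t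

lemma hookJ_le (n t g : ℕ) : hookJ n t g ≤ n := by
  unfold hookJ; split <;> omega

lemma hook_add (n t g : ℕ) (h1 : t ≤ n) (h2 : t ≤ g) :
    hookI n t g + hookJ n t g = g := by
  unfold hookI hookJ; split <;> omega

lemma hookI_mono (n t g g' : ℕ) (h1 : t ≤ n) (h : g ≤ g') :
    hookI n t g ≤ hookI n t g' := by
  unfold hookI; split <;> split <;> omega

lemma hookJ_mono (n t g g' : ℕ) (h1 : t ≤ n) (h2 : t ≤ g) (h : g ≤ g') :
    hookJ n t g ≤ hookJ n t g' := by
  unfold hookJ; split <;> split <;> omega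

lemma hookI_le (n t g a : ℕ) (ha : t ≤ a) (h1 : t ≤ n) (hg : g ≤ a + n - t) :
    hookI n t g ≤ a := by
  unfold hookI; split <;> omega

lemma hook_t (n t g : ℕ) (h1 : t ≤ n) (h2 : t ≤ g) :
    min (hookI n t g) (n - hookJ n t g) = t := by
  unfold hookI hookJ; split <;> omega

lemma hook_self (n i j : ℕ) (hj : j ≤ n) :
    hookI n (min i (n - j)) (i + j) = i ∧ hookJ n (min i (n - j)) (i + j) = j := by
  unfold hookI hookJ; split <;> omega

lemma nRank_cons {m n : ℕ} (x : Fin (n + 1)) (y : Fin m → Fin (n + 1)) :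
    nRank (Fin.cons x y) = (x : ℕ) + nRank y := by
  simp [nRank, Fin.sum_univ_succ]

lemma nRank_succ {m n : ℕ} (c : Fin (m + 1) → Fin (n + 1)) :
    nRank c = (c 0 : ℕ) + nRank (Fin.tail c) := by
  simp [nRank, Fin.sum_univ_succ, Fin.tail]

/-- The `t`-parameter of the hook containing `c`. -/
def sT {m n : ℕ} (S : SCD m n) (c : Fin (m + 1) → Fin (n + 1)) : ℕ :=
  min (nRank (Fin.tail c) - S.bot (Fin.tail c)) (n - (c 0 : ℕ))

def sBot {m n : ℕ} (S : SCD m n) (c : Fin (m + 1) → Fin (n + 1)) : ℕ :=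
  S.bot (Fin.tail c) + sT S c

def sElt {m n : ℕ} (S : SCD m n) (c : Fin (m + 1) → Fin (n + 1)) (k : ℕ) :
    Fin (m + 1) → Fin (n + 1) :=
  Fin.cons ⟨hookJ n (sT S c) (k - S.bot (Fin.tail c)),
      Nat.lt_succ_of_le (hookJ_le n _ _)⟩
    (S.elt (Fin.tail c) (S.bot (Fin.tail c) + hookI n (sT S c) (k - S.bot (Fin.tail c))))

lemma sElt_zero {m n : ℕ} (S : SCD m n) (c : Fin (m + 1) → Fin (n + 1)) (k : ℕ) :
    (sElt S c k 0 : ℕ) = hookJ n (sT S c) (k - S.bot (Fin.tail c)) := by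
  simp [sElt]

lemma sElt_tail {m n : ℕ} (S : SCD m n) (c : Fin (m + 1) → Fin (n + 1)) (k : ℕ) :
    Fin.tail (sElt S c k) =
      S.elt (Fin.tail c) (S.bot (Fin.tail c) + hookI n (sT S c) (k - S.bot (Fin.tail c))) := by
  simp [sElt]

lemma step_facts {m n : ℕ} (S : SCD m n) (c : Fin (m + 1) → Fin (n + 1)) :
    (c 0 : ℕ) ≤ n ∧ 2 * S.bot (Fin.tail c) ≤ m * n ∧
    S.bot (Fin.tail c) ≤ nRank (Fin.tail c) ∧
    nRank (Fin.tail c) ≤ m * n - S.bot (Fin.tail c) ∧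
    sT S c ≤ nRank (Fin.tail c) - S.bot (Fin.tail c) ∧ sT S c ≤ n - (c 0 : ℕ) := by
  refine ⟨Fin.is_le _, S.two_bot_le _, S.bot_le_rank _, S.rank_le _, ?_, ?_⟩
  · exact Nat.min_le_left _ _
  · exact Nat.min_le_right _ _

lemma rho_bounds {m n : ℕ} (S : SCD m n) (c : Fin (m + 1) → Fin (n + 1)) (k : ℕ)
    (hk1 : sBot S c ≤ k) (hk2 : k ≤ (m + 1) * n - sBot S c) :
    S.bot (Fin.tail c) ≤
      S.bot (Fin.tail c) + hookI n (sT S c) (k - S.bot (Fin.tail c)) ∧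
    S.bot (Fin.tail c) + hookI n (sT S c) (k - S.bot (Fin.tail c)) ≤
      m * n - S.bot (Fin.tail c) ∧
    sT S c ≤ k - S.bot (Fin.tail c) ∧ sT S c ≤ n := by
  obtain ⟨hj, h2r, hrR, hRm, ht1, ht2⟩ := step_facts S c
  have hmn : (m + 1) * n = m * n + n := by ring
  unfold sBot at hk1 hk2
  have htn : sT S c ≤ n := by omega
  have hta : sT S c ≤ m * n - 2 * S.bot (Fin.tail c) := by omega
  have hg2 : k - S.bot (Fin.tail c) ≤ (m * n - 2 * S.bot (Fin.tail c)) + n - sT S c := by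
    omega
  have hI := hookI_le n (sT S c) (k - S.bot (Fin.tail c)) _ hta htn hg2
  exact ⟨Nat.le_add_right _ _, by omega, by omega, htn⟩

lemma nRank_sElt {m n : ℕ} (S : SCD m n) (c : Fin (m + 1) → Fin (n + 1)) (k : ℕ)
    (hk1 : sBot S c ≤ k) (hk2 : k ≤ (m + 1) * n - sBot S c) :
    nRank (sElt S c k) = k := by
  obtain ⟨hj, h2r, hrR, hRm, ht1, ht2⟩ := step_facts S c
  obtain ⟨hρ1, hρ2, hg1, htn⟩ := rho_bounds S c k hk1 hk2
  rw [nRank_succ, sElt_zero, sElt_tail, S.rank_elt _ _ hρ1 hρ2]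
  have := hook_add n (sT S c) (k - S.bot (Fin.tail c)) htn hg1
  unfold sBot at hk1
  omega

lemma sT_sElt {m n : ℕ} (S : SCD m n) (c : Fin (m + 1) → Fin (n + 1)) (k : ℕ)
    (hk1 : sBot S c ≤ k) (hk2 : k ≤ (m + 1) * n - sBot S c) :
    S.bot (Fin.tail (sElt S c k)) = S.bot (Fin.tail c) ∧
    sT S (sElt S c k) = sT S c := by
  obtain ⟨hj, h2r, hrR, hRm, ht1, ht2⟩ := step_facts S c
  obtain ⟨hρ1, hρ2, hg1, htn⟩ := rho_bounds S c k hk1 hk2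
  have hbot : S.bot (Fin.tail (sElt S c k)) = S.bot (Fin.tail c) := by
    rw [sElt_tail, S.bot_elt _ _ hρ1 hρ2]
  refine ⟨hbot, ?_⟩
  have : sT S (sElt S c k) =
      min (hookI n (sT S c) (k - S.bot (Fin.tail c)))
        (n - hookJ n (sT S c) (k - S.bot (Fin.tail c))) := by
    rw [show sT S (sElt S c k) = min (nRank (Fin.tail (sElt S c k)) -
      S.bot (Fin.tail (sElt S c k))) (n - ((sElt S c k) 0 : ℕ)) from rfl]
    rw [sElt_zero, hbot, sElt_tail, S.rank_elt _ _ hρ1 hρ2]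
    congr 1
    omega
  rw [this, hook_t n _ _ htn hg1]

def SCD.step {m n : ℕ} (S : SCD m n) : SCD (m + 1) n where
  bot := sBot S
  elt := sElt S
  two_bot_le c := by
    obtain ⟨hj, h2r, hrR, hRm, ht1, ht2⟩ := step_facts S c
    have hmn : (m + 1) * n = m * n + n := by ring
    unfold sBot
    omega
  bot_le_rank c := by
    obtain ⟨hj, h2r, hrR, hRm, ht1, ht2⟩ := step_facts S c
    rw [nRank_succ]
    unfold sBot
    omega
  rank_le c := by
    obtain ⟨hj, h2r, hrR, hRm, ht1, ht2⟩ := step_facts S c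
    have hmn : (m + 1) * n = m * n + n := by ring
    rw [nRank_succ]
    unfold sBot
    omega
  rank_elt c k hk1 hk2 := nRank_sElt S c k hk1 hk2
  mono c k k' hk1 hkk hk2 i := by
    obtain ⟨hj, h2r, hrR, hRm, ht1, ht2⟩ := step_facts S c
    have hk1' : sBot S c ≤ k' := le_trans hk1 hkk
    have hk2' : k ≤ (m + 1) * n - sBot S c := le_trans hkk hk2
    obtain ⟨hρ1, hρ2, hg1, htn⟩ := rho_bounds S c k hk1 hk2'
    obtain ⟨hρ1', hρ2', hg1', _⟩ := rho_bounds S c k' hk1' hk2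
    have hgg : k - S.bot (Fin.tail c) ≤ k' - S.bot (Fin.tail c) := by omega
    refine Fin.cases ?_ ?_ i
    · rw [sElt_zero, sElt_zero]
      exact hookJ_mono n _ _ _ htn hg1 hgg
    · intro i'
      have e1 : sElt S c k i'.succ = Fin.tail (sElt S c k) i' := rfl
      have e2 : sElt S c k' i'.succ = Fin.tail (sElt S c k') i' := rfl
      rw [e1, e2, sElt_tail, sElt_tail]
      exact S.mono _ _ _ hρ1
        (Nat.add_le_add_left (hookI_mono n _ _ _ htn hgg) _) hρ2' i'
  elt_rank c := by
    obtain ⟨hj, h2r, hrR, hRm, ht1, ht2⟩ := step_facts S c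
    have hs := hook_self n (nRank (Fin.tail c) - S.bot (Fin.tail c)) ((c 0 : ℕ)) hj
    have e1 : nRank c - S.bot (Fin.tail c)
        = (nRank (Fin.tail c) - S.bot (Fin.tail c)) + (c 0 : ℕ) := by
      rw [nRank_succ]; omega
    have est : sT S c = min (nRank (Fin.tail c) - S.bot (Fin.tail c)) (n - (c 0 : ℕ)) := rfl
    funext i
    refine Fin.cases ?_ ?_ i
    · apply Fin.ext
      rw [show ((sElt S c (nRank c) 0 : Fin (n + 1)) : ℕ) = _ from sElt_zero S c _]
      rw [e1, est, hs.2]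
    · intro i'
      have e2 : sElt S c (nRank c) i'.succ = Fin.tail (sElt S c (nRank c)) i' := rfl
      rw [e2, sElt_tail, e1, est, hs.1]
      rw [show S.bot (Fin.tail c) + (nRank (Fin.tail c) - S.bot (Fin.tail c))
        = nRank (Fin.tail c) by omega]
      rw [S.elt_rank]
      rfl
  bot_elt c k hk1 hk2 := by
    obtain ⟨hb, hT⟩ := sT_sElt S c k hk1 hk2
    unfold sBot
    rw [hb, hT]
  elt_elt c k k' hk1 hk2 hk1' hk2' := by
    obtain ⟨hb, hT⟩ := sT_sElt S c k hk1 hk2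
    obtain ⟨hρ1, hρ2, hg1, htn⟩ := rho_bounds S c k hk1 hk2
    obtain ⟨hρ1', hρ2', hg1', _⟩ := rho_bounds S c k' hk1' hk2'
    funext i
    refine Fin.cases ?_ ?_ i
    · apply Fin.ext
      rw [show ((sElt S (sElt S c k) k' 0 : Fin (n + 1)) : ℕ) = _ from sElt_zero S _ _]
      rw [show ((sElt S c k' 0 : Fin (n + 1)) : ℕ) = _ from sElt_zero S _ _]
      rw [hb, hT]
    · intro i'
      have e1 : sElt S (sElt S c k) k' i'.succ = Fin.tail (sElt S (sElt S c k) k') i' := rfl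
      have e2 : sElt S c k' i'.succ = Fin.tail (sElt S c k') i' := rfl
      rw [e1, e2, sElt_tail, hb, hT, sElt_tail]
      rw [S.elt_elt _ _ _ hρ1 hρ2 hρ1' hρ2', sElt_tail]

/-- Every `N(m,n)` admits a symmetric chain decomposition. -/
def SCD.mk' : (m : ℕ) → (n : ℕ) → SCD m n
  | 0, n => SCD.zero n
  | m + 1, n => (SCD.mk' m n).step

lemma antichain_card_le {m n : ℕ} (A : Finset (Fin m → Fin (n + 1)))
    (hA : (A : Set (Fin m → Fin (n + 1))).Pairwise (fun a b => ¬ nLT a b ∧ ¬ nLT b a)) :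
    A.card ≤ (Finset.univ.filter fun c : Fin m → Fin (n + 1) => nRank c = m * n / 2).card := by
  classical
  let S := SCD.mk' m n
  apply Finset.card_le_card_of_injOn (fun c => S.elt c (m * n / 2))
  · intro a _
    simp only [Finset.coe_filter, Finset.mem_coe, Set.mem_setOf_eq, Finset.mem_filter, Finset.mem_univ, true_and]
    exact S.rank_elt a (m * n / 2) (by have := S.two_bot_le a; omega)
      (by have := S.two_bot_le a; omega)
  · intro a haA b hbA heq0
    have heq : S.elt a (m * n / 2) = S.elt b (m * n / 2) := heq0
    by_contra hne
    obtain ⟨hab, hba⟩ := hA haA hbA hne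
    have hma : S.bot a ≤ m * n / 2 := by have := S.two_bot_le a; omega
    have hma' : m * n / 2 ≤ m * n - S.bot a := by have := S.two_bot_le a; omega
    have hmb : S.bot b ≤ m * n / 2 := by have := S.two_bot_le b; omega
    have hmb' : m * n / 2 ≤ m * n - S.bot b := by have := S.two_bot_le b; omega
    have ea : S.elt (S.elt b (m * n / 2)) (nRank a) = a := by
      rw [← heq, S.elt_elt a _ _ hma hma' (S.bot_le_rank a) (S.rank_le a), S.elt_rank]
    have eb : S.elt (S.elt b (m * n / 2)) (nRank b) = b := by
      rw [S.elt_elt b _ _ hmb hmb' (S.bot_le_rank b) (S.rank_le b), S.elt_rank]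
    have bza : S.bot (S.elt b (m * n / 2)) = S.bot b := S.bot_elt b _ hmb hmb'
    have bzb : S.bot (S.elt b (m * n / 2)) = S.bot a := by
      rw [← heq]; exact S.bot_elt a _ hma hma'
    rcases Nat.lt_trichotomy (nRank a) (nRank b) with h | h | h
    · refine hab ⟨fun i => ?_, h⟩
      have hm := S.mono (S.elt b (m * n / 2)) (nRank a) (nRank b)
        (by rw [bzb]; exact S.bot_le_rank a) (le_of_lt h)
        (by rw [bza]; exact S.rank_le b) i
      rw [ea, eb] at hm
      exact hm
    · exact hne (ea.symm.trans (by rw [h]; exact eb))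
    · refine hba ⟨fun i => ?_, h⟩
      have hm := S.mono (S.elt b (m * n / 2)) (nRank b) (nRank a)
        (by rw [bza]; exact S.bot_le_rank b) (le_of_lt h)
        (by rw [bzb]; exact S.rank_le a) i
      rw [ea, eb] at hm
      exact hm

lemma card_layer (m n k : ℕ) :
    (((Finset.univ.filter fun c : Fin m → Fin (n + 1) => nRank c = k).card : ℤ))
      = ((∑ j ∈ Finset.range (n + 1), (X : Polynomial ℤ) ^ j) ^ m).coeff k := by
  classical
  have h1 : (∑ j ∈ Finset.range (n + 1), (X : Polynomial ℤ) ^ j) ^ m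
      = ∑ c : Fin m → Fin (n + 1), (X : Polynomial ℤ) ^ (nRank c) := by
    rw [← Fin.sum_univ_eq_sum_range (fun j => (X : Polynomial ℤ) ^ j) (n + 1)]
    rw [show (∑ j : Fin (n + 1), (X : Polynomial ℤ) ^ (j : ℕ)) ^ m
      = ∏ _i : Fin m, (∑ j : Fin (n + 1), (X : Polynomial ℤ) ^ (j : ℕ)) by
        rw [Finset.prod_const, Finset.card_univ, Fintype.card_fin]]
    rw [Finset.prod_univ_sum]
    rw [Fintype.piFinset_univ]
    exact Finset.sum_congr rfl fun c _ => Finset.prod_pow_eq_pow_sum _ _ _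
  rw [h1, Polynomial.finset_sum_coeff]
  simp only [Polynomial.coeff_X_pow]
  rw [Finset.card_filter]
  push_cast
  refine Finset.sum_congr rfl fun c _ => ?_
  by_cases h : nRank c = k
  · simp [h]
  · have h' : ¬(k = nRank c) := fun hh => h hh.symm
    simp [h, h']

/-- `N(m,n)` has the Sperner property: the maximum size of an antichain
equals the number of elements of rank `⌊mn/2⌋`, i.e. the central coefficient
of `(1 + q + ⋯ + q^n)^m`. -/
theorem stmt_9 (m n : ℕ) (hm : 0 < m) (hn : 0 < n) :
    IsGreatest
      {s : ℕ | ∃ A : Finset (Fin m → Fin (n + 1)),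
        (A : Set (Fin m → Fin (n + 1))).Pairwise (fun a b => ¬ nLT a b ∧ ¬ nLT b a) ∧
        A.card = s}
      ((Finset.univ.filter fun c : Fin m → Fin (n + 1) => nRank c = m * n / 2).card) ∧
    (((Finset.univ.filter fun c : Fin m → Fin (n + 1) => nRank c = m * n / 2).card : ℤ)
      = ((∑ j ∈ Finset.range (n + 1), (X : Polynomial ℤ) ^ j) ^ m).coeff (m * n / 2)) := by
  refine ⟨⟨⟨Finset.univ.filter fun c : Fin m → Fin (n + 1) => nRank c = m * n / 2,
      ?_, rfl⟩, ?_⟩, card_layer m n (m * n / 2)⟩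
  · intro a ha b hb hne
    simp only [Finset.coe_filter, Set.mem_setOf_eq, Finset.mem_univ, true_and] at ha hb
    exact ⟨fun hlt => by have := hlt.2; omega, fun hlt => by have := hlt.2; omega⟩
  · rintro s ⟨A, hA, rfl⟩
    exact antichain_card_le A hA
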